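/- arXiv:1905.06146 — 2 statements merged into one kernel-verified Lean document; each statement's English description precedes it below -/
import Mathlib

section
/- With the notation of the previous statement, for every x ≠ 0: |Dφ(x)|^γ · M⁺_{λ,Λ}(D²φ(x)) ≤ m. Consequently, if F is uniformly elliptic with F(0)=0 and f satisfies inf f ≥ m > 0, then φ is a classical subsolution-comparison barrier: |Dφ|^γ F(D²φ) − f(x) ≤ 0 pointwise for x ≠ 0. -/
/-! Since `D²φ(x) ≥ 0`, `M⁺(D²φ(x)) = Λ tr D²φ(x) = Λ B (1/(γ+1) + n - 1) |x|^{-γ/(γ+1)}`, where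
`B = c (γ+2)/(γ+1)` and `|Dφ(x)| = B |x|^{1/(γ+1)}`. The powers of `|x|` cancel in `|Dφ|^γ M⁺`,
leaving `Λ (n(γ+1) - γ) B^{γ+1} / (γ+1)`, and `c` is chosen so that
`B^{γ+1} = m (γ+1) / (λ + n(γ+1)Λ)`; the product is therefore
`m Λ (n(γ+1) - γ) / (λ + n(γ+1)Λ) ≤ m`. The second claim follows from
`F(X) = F(X) - F(0) ≤ M⁺(X)` and `f ≥ m`. -/

open Matrix

/-- The Pucci minimal operator `M⁻_{λ,Λ}(X) = λ Σ_{e_i>0} e_i + Λ Σ_{e_i<0} e_i`,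
where the `e_i` are the eigenvalues of the symmetric (Hermitian) matrix `X`. -/
noncomputable def pucciMinus {n : ℕ} (lam Lam : ℝ) (X : Matrix (Fin n) (Fin n) ℝ)
    (hX : X.IsHermitian) : ℝ :=
  ∑ i, (lam * max (hX.eigenvalues i) 0 + Lam * min (hX.eigenvalues i) 0)

/-- The Pucci maximal operator `M⁺_{λ,Λ}(X) = Λ Σ_{e_i>0} e_i + λ Σ_{e_i<0} e_i`. -/
noncomputable def pucciPlus {n : ℕ} (lam Lam : ℝ) (X : Matrix (Fin n) (Fin n) ℝ)
    (hX : X.IsHermitian) : ℝ :=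
  ∑ i, (Lam * max (hX.eigenvalues i) 0 + lam * min (hX.eigenvalues i) 0)

/-- `F` is uniformly elliptic with ellipticity constants `λ ≤ Λ`:
`M⁻_{λ,Λ}(X−Y) ≤ F(X) − F(Y) ≤ M⁺_{λ,Λ}(X−Y)` for all symmetric `X, Y`. -/
def UniformlyElliptic {n : ℕ} (lam Lam : ℝ) (F : Matrix (Fin n) (Fin n) ℝ → ℝ) : Prop :=
  ∀ X Y : Matrix (Fin n) (Fin n) ℝ, ∀ h : (X - Y).IsHermitian,
    pucciMinus lam Lam (X - Y) h ≤ F X - F Y ∧ F X - F Y ≤ pucciPlus lam Lam (X - Y) h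

lemma pucciPlus_eq_mul_sum_of_nonneg {n : ℕ} (lam Lam : ℝ) {X : Matrix (Fin n) (Fin n) ℝ}
    (hX : X.IsHermitian) (h : ∀ i, 0 ≤ hX.eigenvalues i) :
    pucciPlus lam Lam X hX = Lam * ∑ i, hX.eigenvalues i := by
  rw [pucciPlus, Finset.mul_sum]
  refine Finset.sum_congr rfl fun i _ => ?_
  rw [max_eq_left (h i), min_eq_right (h i), mul_zero, add_zero]

lemma UniformlyElliptic.le_pucciPlus {n : ℕ} {lam Lam : ℝ} {F : Matrix (Fin n) (Fin n) ℝ → ℝ}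
    (hF : UniformlyElliptic lam Lam F) (hF0 : F 0 = 0) {X : Matrix (Fin n) (Fin n) ℝ}
    (hX : X.IsHermitian) : F X ≤ pucciPlus lam Lam X hX := by
  have h := (hF X 0 (by simpa using hX)).2
  simpa only [sub_zero, hF0] using h

lemma Fintype.sum_eq_add_card_sub_one_mul {ι : Type*} [Fintype ι] {v : ι → ℝ} {a b : ℝ}
    (i₀ : ι) (h₀ : v i₀ = a) (h : ∀ i ≠ i₀, v i = b) :
    ∑ i, v i = a + (Fintype.card ι - 1) * b := by
  classical
  rw [← Finset.add_sum_erase _ _ (Finset.mem_univ i₀), h₀,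
    Finset.sum_congr rfl fun i hi => h i (Finset.ne_of_mem_erase hi), Finset.sum_const,
    Finset.card_erase_of_mem (Finset.mem_univ i₀), Finset.card_univ, nsmul_eq_mul,
    Nat.cast_sub (Fintype.card_pos_iff.2 ⟨i₀⟩), Nat.cast_one]

lemma rpow_one_div_one_add_rpow_mul_rpow_neg_div {r : ℝ} (hr : 0 < r) (γ : ℝ) :
    (r ^ (1 / (1 + γ))) ^ γ * r ^ (-γ / (γ + 1)) = 1 := by
  rw [← Real.rpow_mul hr.le, ← Real.rpow_add hr,
    show 1 / (1 + γ) * γ + -γ / (γ + 1) = 0 by ring, Real.rpow_zero]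

lemma radial_barrier_gradient_coeff_rpow {γ m K : ℝ} (hγ : -1 < γ) (hm : 0 ≤ m) (hK : 0 < K) :
    ((m * (γ + 1) ^ (γ + 2) / (K * (γ + 2) ^ (γ + 1))) ^ (1 / (γ + 1)) * ((γ + 2) / (γ + 1)))
      ^ (γ + 1) = m * (γ + 1) / K := by
  have hγ1 : 0 < γ + 1 := by linarith
  have hγ2 : 0 < γ + 2 := by linarith
  rw [Real.mul_rpow (by positivity) (by positivity), one_div,
    Real.rpow_inv_rpow (by positivity) hγ1.ne', Real.div_rpow hγ2.le hγ1.le,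
    show γ + 2 = γ + 1 + 1 by ring, Real.rpow_add_one hγ1.ne']
  have : (0 : ℝ) < (γ + 1 + 1) ^ (γ + 1) := by positivity
  have : (0 : ℝ) < (γ + 1) ^ (γ + 1) := by positivity
  field_simp

lemma radial_barrier_gradient_pow_mul_pucciPlus_le {n : ℕ} {γ lam Lam m c r : ℝ}
    (hγ : 0 ≤ γ) (hlam : 0 < lam) (hLam : 0 ≤ Lam) (hm : 0 < m) (hr : 0 < r)
    (hc : c = (m * (γ + 1) ^ (γ + 2) /
      ((lam + n * (γ + 1) * Lam) * (γ + 2) ^ (γ + 1))) ^ (1 / (γ + 1)))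
    {X : Matrix (Fin n) (Fin n) ℝ} (hX : X.IsHermitian) (i₀ : Fin n)
    (h₀ : hX.eigenvalues i₀ = c * ((γ + 2) / (γ + 1) ^ 2) * r ^ (-γ / (γ + 1)))
    (h₁ : ∀ i ≠ i₀, hX.eigenvalues i = c * ((γ + 2) / (γ + 1)) * r ^ (-γ / (γ + 1))) :
    (c * ((γ + 2) / (γ + 1)) * r ^ (1 / (1 + γ))) ^ γ * pucciPlus lam Lam X hX ≤ m := by
  set K := lam + n * (γ + 1) * Lam
  have hK : 0 < K := by positivity
  have hc0 : 0 < c := hc ▸ by positivity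
  have hB : (c * ((γ + 2) / (γ + 1))) ^ (γ + 1) = m * (γ + 1) / K := by
    rw [hc]; exact radial_barrier_gradient_coeff_rpow (by linarith) hm.le hK
  set B := c * ((γ + 2) / (γ + 1))
  set p := r ^ (-γ / (γ + 1))
  set q := r ^ (1 / (1 + γ))
  have hqp : q ^ γ * p = 1 := rpow_one_div_one_add_rpow_mul_rpow_neg_div hr γ
  have hpucci : pucciPlus lam Lam X hX = Lam * (B / (γ + 1) * p + (n - 1) * (B * p)) := by
    have heig : ∀ i, 0 ≤ hX.eigenvalues i := fun i => by
      by_cases hi : i = i₀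
      · rw [hi, h₀]; positivity
      · rw [h₁ i hi]; positivity
    rw [pucciPlus_eq_mul_sum_of_nonneg lam Lam hX heig,
      Fintype.sum_eq_add_card_sub_one_mul i₀ h₀ h₁, Fintype.card_fin]
    simp only [B]
    field_simp
  have hLK : Lam * (1 + (n - 1) * (γ + 1)) ≤ K := by nlinarith
  calc (B * q) ^ γ * pucciPlus lam Lam X hX
      = Lam * ((γ + 1)⁻¹ + (n - 1)) * B ^ (γ + 1) * (q ^ γ * p) := by
        rw [hpucci, Real.mul_rpow (by positivity) (by positivity),
          Real.rpow_add_one (by positivity) γ]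
        ring
    _ = m * (Lam * (1 + (n - 1) * (γ + 1))) / K := by
        rw [hB, hqp]
        field_simp
    _ ≤ m := div_le_of_le_mul₀ hK.le hm.le (by nlinarith)

-- `X` stands for `D²φ(x)` and `c (γ+2)/(γ+1) ‖x‖^{1/(1+γ)}` for `|Dφ(x)|`.
/-- for the barrier `φ(x) = c|x|^{(γ+2)/(γ+1)}`, at any `x ≠ 0` one has
`|Dφ(x)|^γ · M⁺_{λ,Λ}(D²φ(x)) ≤ m`; consequently, for any uniformly elliptic `F` with
`F(0)=0` and any source `f` with `inf f ≥ m`, `|Dφ|^γ F(D²φ) − f(x) ≤ 0`.  The Hessian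
`D²φ(x)` is represented by a symmetric matrix `X` whose eigenvalues are
`μ₁ = c (γ+2)/(γ+1)² |x|^{−γ/(γ+1)}` (once) and `μ₂ = c (γ+2)/(γ+1) |x|^{−γ/(γ+1)}`
(`n−1` times). -/
theorem radial_barrier_is_supersolution {n : ℕ} (γ lam Lam m c : ℝ)
    (hγ : 0 < γ) (hlam : 0 < lam) (hll : lam ≤ Lam) (hm : 0 < m)
    (hc : c = (m * (γ + 1) ^ (γ + 2) /
      ((lam + n * (γ + 1) * Lam) * (γ + 2) ^ (γ + 1))) ^ (1 / (γ + 1)))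
    (x : EuclideanSpace ℝ (Fin n)) (hx : x ≠ 0)
    (X : Matrix (Fin n) (Fin n) ℝ) (hX : X.IsHermitian)
    (hEig : ∃ i₀ : Fin n,
      hX.eigenvalues i₀ = c * ((γ + 2) / (γ + 1) ^ 2) * ‖x‖ ^ (-γ / (γ + 1)) ∧
      ∀ i ≠ i₀, hX.eigenvalues i = c * ((γ + 2) / (γ + 1)) * ‖x‖ ^ (-γ / (γ + 1))) :
    (c * ((γ + 2) / (γ + 1)) * ‖x‖ ^ (1 / (1 + γ))) ^ γ * pucciPlus lam Lam X hX ≤ m ∧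
    ∀ F : Matrix (Fin n) (Fin n) ℝ → ℝ, UniformlyElliptic lam Lam F → F 0 = 0 →
      ∀ f : EuclideanSpace ℝ (Fin n) → ℝ, (∀ y, m ≤ f y) →
        (c * ((γ + 2) / (γ + 1)) * ‖x‖ ^ (1 / (1 + γ))) ^ γ * F X - f x ≤ 0 := by
  obtain ⟨i₀, h₀, h₁⟩ := hEig
  have hLam : 0 < Lam := hlam.trans_le hll
  have hbound := radial_barrier_gradient_pow_mul_pucciPlus_le hγ.le hlam hLam.le hm
    (norm_pos_iff.2 hx) hc hX i₀ h₀ h₁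
  refine ⟨hbound, fun F hF hF0 f hf => ?_⟩
  have hgrad : 0 ≤ (c * ((γ + 2) / (γ + 1)) * ‖x‖ ^ (1 / (1 + γ))) ^ γ := by
    rw [hc]; positivity
  calc (c * ((γ + 2) / (γ + 1)) * ‖x‖ ^ (1 / (1 + γ))) ^ γ * F X - f x
      ≤ (c * ((γ + 2) / (γ + 1)) * ‖x‖ ^ (1 / (1 + γ))) ^ γ * pucciPlus lam Lam X hX - m :=
        sub_le_sub (mul_le_mul_of_nonneg_left (hF.le_pucciPlus hF0 hX) hgrad) (hf x)
    _ ≤ 0 := sub_nonpos.2 hbound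
end

section
/- Porosity from quadratic non-degeneracy and quadratic growth: let E = ∂{u > φ} ∩ Ω̃ and suppose there are constants c, C > 0 such that for every x₀ ∈ E and small r: (i) there exists y ∈ ∂B_r(x₀) with u(y) − φ(y) ≥ c r², and (ii) u(z) − φ(z) ≤ C (dist(z, E))² for every z. Then E is porous with constant δ = (1/4)√(c/C): for every x₀ ∈ E and small r, there exists y with B_{2δr}(y) ⊆ B_{2r}(x₀) \ E. -/
/-!
Take the point `y` on `∂B_r(x₀)` given by non-degeneracy. Quadratic growth at `y` turns
`c r² ≤ u(y) - φ(y) ≤ C dist(y, E)²` into `dist(y, E) ≥ √(c/C) r`, so every ball around `y` of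
radius at most `√(c/C) r` misses `E`; it also stays in `B_{2r}(x₀)` because
`dist(y, E) ≤ |y - x₀| = r`.
-/

open Metric

theorem Real.sqrt_div_mul_le_of_mul_sq_le {c C r d : ℝ} (hC : 0 < C) (hr : 0 ≤ r) (hd : 0 ≤ d)
    (h : c * r ^ 2 ≤ C * d ^ 2) : √(c / C) * r ≤ d := by
  rw [← Real.sqrt_sq hr, ← Real.sqrt_mul' _ (sq_nonneg r), Real.sqrt_le_left hd,
    div_mul_eq_mul_div, div_le_iff₀' hC]
  exact h

theorem Metric.ball_subset_ball_diff_of_le_infDist {X : Type*} [PseudoMetricSpace X]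
    {E : Set X} {x₀ y : X} {r ρ : ℝ} (hx₀ : x₀ ∈ E) (hy : dist y x₀ ≤ r)
    (hρ : ρ ≤ infDist y E) : ball y ρ ⊆ ball x₀ (2 * r) \ E := by
  have hρr : ρ ≤ r := hρ.trans ((infDist_le_dist_of_mem hx₀).trans hy)
  exact Set.subset_sdiff.mpr
    ⟨ball_subset_ball' (by linarith), disjoint_ball_infDist.mono_left (ball_subset_ball hρ)⟩

theorem free_boundary_porous_general {n : ℕ} (u φ : EuclideanSpace ℝ (Fin n) → ℝ)
    (E : Set (EuclideanSpace ℝ (Fin n))) (c C r₀ : ℝ)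
    (hC : 0 < C)
    (hnd : ∀ x₀ ∈ E, ∀ r : ℝ, 0 < r → r < r₀ →
      ∃ y ∈ sphere x₀ r, c * r ^ 2 ≤ u y - φ y)
    (hgrowth : ∀ z, u z - φ z ≤ C * (infDist z E) ^ 2) :
    ∀ x₀ ∈ E, ∀ r : ℝ, 0 < r → r < r₀ →
      ∃ y, ball y (2 * ((1 / 4) * Real.sqrt (c / C)) * r) ⊆ ball x₀ (2 * r) \ E := by
  intro x₀ hx₀ r hr hrr₀
  obtain ⟨y, hy, hcy⟩ := hnd x₀ hx₀ r hr hrr₀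
  have hsep : √(c / C) * r ≤ infDist y E :=
    Real.sqrt_div_mul_le_of_mul_sq_le hC hr.le infDist_nonneg (hcy.trans (hgrowth y))
  have hsr : 0 ≤ √(c / C) * r := by positivity
  refine ⟨y, ball_subset_ball_diff_of_le_infDist hx₀ (mem_sphere.mp hy).le ?_⟩
  linarith

/-- porosity of the free boundary from quadratic non-degeneracy (i) and
quadratic growth (ii), with porosity constant `δ = (1/4)√(c/C)`. -/
theorem free_boundary_porous {n : ℕ} (u φ : EuclideanSpace ℝ (Fin n) → ℝ)
    (E : Set (EuclideanSpace ℝ (Fin n))) (c C r₀ : ℝ)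
    (hc : 0 < c) (hC : 0 < C) (hr₀ : 0 < r₀)
    (hnd : ∀ x₀ ∈ E, ∀ r : ℝ, 0 < r → r < r₀ →
      ∃ y ∈ sphere x₀ r, c * r ^ 2 ≤ u y - φ y)
    (hgrowth : ∀ z, u z - φ z ≤ C * (infDist z E) ^ 2) :
    ∀ x₀ ∈ E, ∀ r : ℝ, 0 < r → r < r₀ →
      ∃ y, ball y (2 * ((1 / 4) * Real.sqrt (c / C)) * r) ⊆ ball x₀ (2 * r) \ E :=
  free_boundary_porous_general u φ E c C r₀ hC hnd hgrowth
end
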